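/- arXiv:1903.01265 — 3 statements merged into one kernel-verified Lean document; each statement's English description precedes it below -/
import Mathlib

section
/- For β > 0 and y = (y_1 < ⋯ < y_N) with y_j ∈ ℤ_{≥0}, the kernel Λ*_{N,β}(y, dx) = (Δ_N(x)/Δ_N(y)) · det(x_i^{y_j+β−1} e^{-x_i} / Γ(y_j+β))_{i,j=1}^N dx_1⋯dx_N integrates to 1 over the chamber W^N_{c,+} = {x ∈ ℝ_{≥0}^N : x_1 ≤ ⋯ ≤ x_N}. -/
/-!
The integrand is `det [x_i ^ j] * det [γ_{z_j}(x_i)] / Δ_N(y)`, where `z_j = y_j + β` and `γ_z` is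
the density of the Gamma distribution with shape `z` and rate `1`; the second determinant vanishes
as soon as some `x_i < 0`. The product of the two determinants is invariant under permutations of
the coordinates, so its integral over the chamber is `1 / N!` times its integral over `ℝ^N`, which
Andréief's identity evaluates as `N! * det [∫ t ^ j γ_{z_k}(t) dt]`. This moment is
`z_k (z_k + 1) ⋯ (z_k + j - 1)`, a monic polynomial of degree `j` in `z_k`, so the determinant is
the Vandermonde determinant `Δ_N(z) = Δ_N(y)`.
-/

open MeasureTheory Finset ProbabilityTheory Equiv

/-- Vandermonde product `∏_{i<j} (x_j - x_i)`. -/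
noncomputable def vanderProd {N : ℕ} (x : Fin N → ℝ) : ℝ :=
  ∏ i : Fin N, ∏ j ∈ Finset.Ioi i, (x j - x i)

lemma Matrix.det_vandermonde_add_const {R : Type*} [CommRing R] {n : ℕ} (v : Fin n → R) (c : R) :
    (Matrix.vandermonde fun i => v i + c).det = (Matrix.vandermonde v).det := by
  simp only [Matrix.det_vandermonde, add_sub_add_right_eq_sub]

lemma Matrix.det_ascPochhammer_eval_eq_det_vandermonde {R : Type*} [CommRing R] [IsDomain R]
    {n : ℕ} (v : Fin n → R) :
    (Matrix.of fun i j : Fin n => (ascPochhammer R j).eval (v i)).det =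
      (Matrix.vandermonde v).det :=
  (Matrix.det_eval_matrixOfPolynomials_eq_det_vandermonde v _
    (fun j => ascPochhammer_natDegree R j) fun j => monic_ascPochhammer R j).symm

section PermExpansion

variable {R α ι : Type*} [CommRing R] [Fintype ι] [DecidableEq ι]

local notation "ε " σ:arg => ((Perm.sign σ : ℤ) : R)

lemma sign_mul_sign_self (σ : Perm ι) : ε σ * ε σ = 1 := by
  rw [← Int.cast_mul, Int.units_coe_mul_self, Int.cast_one]

lemma Matrix.det_eq_sum_sign_mul_prod_apply (M : Matrix ι ι R) :
    M.det = ∑ τ : Perm ι, ε τ * ∏ i, M i (τ i) := by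
  rw [← Matrix.det_transpose, Matrix.det_apply']
  rfl

lemma Matrix.det_eq_sum_sign_mul_sign_mul_prod (M : Matrix ι ι R) (σ : Perm ι) :
    M.det = ∑ τ : Perm ι, ε σ * ε τ * ∏ i, M (σ i) (τ i) := by
  calc M.det = ε σ * (M.submatrix σ id).det := by
        rw [Matrix.det_permute, ← mul_assoc, sign_mul_sign_self, one_mul]
    _ = _ := by
        rw [Matrix.det_eq_sum_sign_mul_prod_apply, mul_sum]
        simp_rw [mul_assoc]
        rfl

lemma det_mul_det_comp_perm (f g : ι → α → R) (σ : Perm ι) (x : ι → α) :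
    (Matrix.of fun i j => f j ((x ∘ σ) i)).det * (Matrix.of fun i j => g j ((x ∘ σ) i)).det =
      (Matrix.of fun i j => f j (x i)).det * (Matrix.of fun i j => g j (x i)).det := by
  change ((Matrix.of fun i j => f j (x i)).submatrix σ id).det *
    ((Matrix.of fun i j => g j (x i)).submatrix σ id).det = _
  rw [Matrix.det_permute, Matrix.det_permute]
  linear_combination
    (Matrix.of fun i j => f j (x i)).det * (Matrix.of fun i j => g j (x i)).det *
      sign_mul_sign_self (R := R) σ

lemma det_mul_det_eq_sum_sum (f g : ι → α → R) (x : ι → α) :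
    (Matrix.of fun i j => f j (x i)).det * (Matrix.of fun i j => g j (x i)).det =
      ∑ σ : Perm ι, ∑ τ : Perm ι, ε σ * ε τ * ∏ i, f (σ i) (x i) * g (τ i) (x i) := by
  simp_rw [Matrix.det_eq_sum_sign_mul_prod_apply, sum_mul_sum, prod_mul_distrib]
  refine sum_congr rfl fun σ _ => sum_congr rfl fun τ _ => ?_
  simp only [Matrix.of_apply]
  ring

end PermExpansion

section Andreief

variable {α ι : Type*} [Fintype ι] [DecidableEq ι] [MeasurableSpace α] {μ : Measure α}
  [SigmaFinite μ] {f g : ι → α → ℝ}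

local notation "ε " σ:arg => ((Perm.sign σ : ℤ) : ℝ)

lemma integrable_det_mul_det (hfg : ∀ j k, Integrable (fun t => f j t * g k t) μ) :
    Integrable (fun x => (Matrix.of fun i j => f j (x i)).det *
      (Matrix.of fun i j => g j (x i)).det) (Measure.pi fun _ => μ) := by
  simp_rw [det_mul_det_eq_sum_sum]
  exact integrable_finsetSum _ fun σ _ => integrable_finsetSum _ fun τ _ =>
    (Integrable.fintype_prod fun i => hfg (σ i) (τ i)).const_mul _

/-- Andréief's identity. -/
theorem integral_det_mul_det (hfg : ∀ j k, Integrable (fun t => f j t * g k t) μ) :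
    ∫ x, (Matrix.of fun i j => f j (x i)).det * (Matrix.of fun i j => g j (x i)).det
        ∂(Measure.pi fun _ => μ)
      = (Fintype.card ι).factorial * (Matrix.of fun j k => ∫ t, f j t * g k t ∂μ).det := by
  have hterm (σ τ : Perm ι) : Integrable (fun x : ι → α =>
      ε σ * ε τ * ∏ i, f (σ i) (x i) * g (τ i) (x i)) (Measure.pi fun _ => μ) :=
    (Integrable.fintype_prod fun i => hfg (σ i) (τ i)).const_mul _
  have hfubini (σ τ : Perm ι) :
      ∫ x, ∏ i, f (σ i) (x i) * g (τ i) (x i) ∂(Measure.pi fun _ => μ) =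
        ∏ i, ∫ t, f (σ i) t * g (τ i) t ∂μ :=
    integral_fintype_prod_eq_prod fun i t => f (σ i) t * g (τ i) t
  simp_rw [det_mul_det_eq_sum_sum]
  rw [integral_finsetSum _ fun σ _ => integrable_finsetSum _ fun τ _ => hterm σ τ]
  simp_rw [integral_finsetSum _ fun τ _ => hterm _ τ, integral_const_mul, hfubini]
  calc _ = ∑ _σ : Perm ι, (Matrix.of fun j k => ∫ t, f j t * g k t ∂μ).det :=
        sum_congr rfl fun σ _ => (Matrix.det_eq_sum_sign_mul_sign_mul_prod _ σ).symm
    _ = _ := by rw [sum_const, card_univ, Fintype.card_perm, nsmul_eq_mul]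

end Andreief

section Chamber

variable {ι : Type*} [Fintype ι]

lemma volume_setOf_apply_eq_apply {i j : ι} (hij : i ≠ j) :
    volume {x : ι → ℝ | x i = x j} = 0 := by
  classical
  let L : (ι → ℝ) →ₗ[ℝ] ℝ := LinearMap.proj (R := ℝ) (φ := fun _ => ℝ) i - LinearMap.proj j
  have hker : {x : ι → ℝ | x i = x j} = (LinearMap.ker L : Set (ι → ℝ)) := by
    ext x
    simp [L, sub_eq_zero]
  rw [hker]
  refine Measure.addHaar_submodule _ _ fun htop => ?_
  have h : Pi.single i (1 : ℝ) ∈ LinearMap.ker L := htop ▸ Submodule.mem_top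
  simp [L, Pi.single_eq_of_ne' hij] at h

lemma volume_setOf_not_injective : volume {x : ι → ℝ | ¬ Function.Injective x} = 0 := by
  refine measure_mono_null (fun x hx => ?_) <| measure_iUnion_null fun i =>
    measure_iUnion_null fun j => measure_iUnion_null fun hij : i ≠ j =>
      volume_setOf_apply_eq_apply hij
  obtain ⟨i, j, hij, hne⟩ := Function.not_injective_iff.1 hx
  exact Set.mem_iUnion₂.2 ⟨i, j, Set.mem_iUnion.2 ⟨hne, hij⟩⟩

lemma setIntegral_preimage_comp_perm {F : (ι → ℝ) → ℝ}
    (hsymm : ∀ (σ : Perm ι) x, F (x ∘ σ) = F x) (σ : Perm ι) (s : Set (ι → ℝ)) :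
    ∫ x in (· ∘ σ) ⁻¹' s, F x = ∫ x in s, F x := by
  have h := (volume_preserving_arrowCongr' σ.symm (MeasurableEquiv.refl ℝ)
    (.id volume)).setIntegral_preimage_emb (MeasurableEquiv.measurableEmbedding _) F s
  rw [← h]
  congr 1 with x
  exact (hsymm σ x).symm

variable {N : ℕ}

lemma aedisjoint_setOf_monotone_comp_perm :
    Pairwise fun σ τ : Perm (Fin N) =>
      AEDisjoint volume {x : Fin N → ℝ | Monotone (x ∘ σ)} {x | Monotone (x ∘ τ)} := by
  intro σ τ hστ
  refine measure_mono_null ?_ volume_setOf_not_injective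
  rintro x ⟨hσ, hτ⟩ hinj
  exact hστ (Equiv.coe_fn_injective (hinj.comp_left (Tuple.unique_monotone hσ hτ)))

lemma iUnion_setOf_monotone_comp_perm :
    ⋃ σ : Perm (Fin N), {x : Fin N → ℝ | Monotone (x ∘ σ)} = Set.univ :=
  Set.eq_univ_of_forall fun x => Set.mem_iUnion.2 ⟨Tuple.sort x, Tuple.monotone_sort x⟩

lemma integral_eq_factorial_mul_setIntegral_monotone {F : (Fin N → ℝ) → ℝ} (hF : Integrable F)
    (hsymm : ∀ (σ : Perm (Fin N)) x, F (x ∘ σ) = F x) :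
    ∫ x, F x = N.factorial * ∫ x in {x | Monotone x}, F x := by
  have hmeas (σ : Perm (Fin N)) : NullMeasurableSet {x : Fin N → ℝ | Monotone (x ∘ σ)} :=
    (isClosed_monotone.preimage
      (by fun_prop : Continuous fun x : Fin N → ℝ => x ∘ σ)).nullMeasurableSet
  calc ∫ x, F x = ∑ σ : Perm (Fin N), ∫ x in {x | Monotone (x ∘ σ)}, F x := by
        rw [← setIntegral_univ, ← iUnion_setOf_monotone_comp_perm, integral_iUnion_ae hmeas
          aedisjoint_setOf_monotone_comp_perm hF.integrableOn, tsum_fintype]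
    _ = ∑ _σ : Perm (Fin N), ∫ x in {x | Monotone x}, F x :=
        sum_congr rfl fun σ _ => setIntegral_preimage_comp_perm hsymm σ {x | Monotone x}
    _ = N.factorial * ∫ x in {x | Monotone x}, F x := by
        rw [sum_const, card_univ, Fintype.card_perm, Fintype.card_fin, nsmul_eq_mul]

theorem setIntegral_monotone_det_mul_det {f g : Fin N → ℝ → ℝ}
    (hfg : ∀ j k, Integrable fun t => f j t * g k t) :
    ∫ x in {x : Fin N → ℝ | Monotone x},
        (Matrix.of fun i j => f j (x i)).det * (Matrix.of fun i j => g j (x i)).det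
      = (Matrix.of fun j k => ∫ t, f j t * g k t).det := by
  have h := integral_eq_factorial_mul_setIntegral_monotone (integrable_det_mul_det hfg)
    (det_mul_det_comp_perm f g)
  rw [volume_pi, integral_det_mul_det hfg, Fintype.card_fin] at h
  exact (mul_left_cancel₀ (by positivity) h).symm

end Chamber

lemma Real.Gamma_add_nat_eq_ascPochhammer_eval_mul {z : ℝ} (hz : ∀ m : ℕ, z + m ≠ 0) (n : ℕ) :
    Real.Gamma (z + n) = (ascPochhammer ℝ n).eval z * Real.Gamma z := by
  induction n with
  | zero => simp
  | succ n ih =>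
    rw [Nat.cast_succ, ← add_assoc, Real.Gamma_add_one (hz n), ih, ascPochhammer_succ_eval]
    ring

lemma gammaPDFReal_one_of_nonneg {a x : ℝ} (hx : 0 ≤ x) :
    gammaPDFReal a 1 x = x ^ (a - 1) * Real.exp (-x) / Real.Gamma a := by
  rw [gammaPDFReal, if_pos hx, Real.one_rpow, one_mul]
  ring

lemma pow_mul_gammaPDFReal_one_of_pos {z t : ℝ} (ht : 0 < t) (k : ℕ) :
    t ^ k * gammaPDFReal z 1 t = Real.exp (-t) * t ^ (z + k - 1) / Real.Gamma z := by
  rw [gammaPDFReal_one_of_nonneg ht.le, show z + k - 1 = k + (z - 1) by ring,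
    Real.rpow_add ht, Real.rpow_natCast]
  ring

lemma support_pow_mul_gammaPDFReal_subset_Ici (z : ℝ) (k : ℕ) :
    Function.support (fun t => t ^ k * gammaPDFReal z 1 t) ⊆ Set.Ici 0 :=
  Function.support_subset_iff'.2 fun t ht => by
    rw [gammaPDFReal, if_neg (show ¬ 0 ≤ t from ht), mul_zero]

lemma integrable_pow_mul_gammaPDFReal_one {z : ℝ} (hz : 0 < z) (k : ℕ) :
    Integrable fun t => t ^ k * gammaPDFReal z 1 t := by
  rw [← integrableOn_iff_integrable_of_support_subset
      (support_pow_mul_gammaPDFReal_subset_Ici z k), integrableOn_Ici_iff_integrableOn_Ioi]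
  exact IntegrableOn.congr_fun ((Real.GammaIntegral_convergent (by positivity)).div_const _)
    (fun t ht => (pow_mul_gammaPDFReal_one_of_pos ht k).symm) measurableSet_Ioi

lemma integral_pow_mul_gammaPDFReal_one {z : ℝ} (hz : 0 < z) (k : ℕ) :
    ∫ t, t ^ k * gammaPDFReal z 1 t = (ascPochhammer ℝ k).eval z := by
  rw [← setIntegral_eq_integral_of_forall_compl_eq_zero
      (Function.support_subset_iff'.1 (support_pow_mul_gammaPDFReal_subset_Ici z k)),
    integral_Ici_eq_integral_Ioi,
    setIntegral_congr_fun measurableSet_Ioi fun t ht => pow_mul_gammaPDFReal_one_of_pos ht k,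
    integral_div, ← Real.Gamma_eq_integral (by positivity),
    Real.Gamma_add_nat_eq_ascPochhammer_eval_mul (fun m => by positivity),
    mul_div_cancel_right₀ _ (Real.Gamma_pos_of_pos hz).ne']

lemma det_moments_gammaPDFReal_one {N : ℕ} {z : Fin N → ℝ} (hz : ∀ j, 0 < z j) :
    (Matrix.of fun j k : Fin N => ∫ t, t ^ (j : ℕ) * gammaPDFReal (z k) 1 t).det =
      (Matrix.vandermonde z).det := by
  simp_rw [integral_pow_mul_gammaPDFReal_one (hz _)]
  rw [← Matrix.det_transpose]
  exact Matrix.det_ascPochhammer_eval_eq_det_vandermonde z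

theorem setIntegral_vandermonde_mul_det_gammaDensity {N : ℕ} {z : Fin N → ℝ}
    (hz : ∀ j, 0 < z j) :
    ∫ x in {x : Fin N → ℝ | (∀ i, 0 ≤ x i) ∧ Monotone x}, (Matrix.vandermonde x).det *
        (Matrix.of fun i j => x i ^ (z j - 1) * Real.exp (-x i) / Real.Gamma (z j)).det
      = (Matrix.vandermonde z).det := by
  have hS : MeasurableSet {x : Fin N → ℝ | (∀ i, 0 ≤ x i) ∧ Monotone x} := by
    simp only [Set.ofPred_and, Set.ofPred_forall]
    exact (MeasurableSet.iInter fun i => measurableSet_le measurable_const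
      (measurable_pi_apply i)).inter isClosed_monotone.measurableSet
  have hpdf {x : Fin N → ℝ} (hx : ∀ i, 0 ≤ x i) :
      Matrix.of (fun i j => x i ^ (z j - 1) * Real.exp (-x i) / Real.Gamma (z j)) =
        Matrix.of fun i j => gammaPDFReal (z j) 1 (x i) := by
    ext i j
    exact (gammaPDFReal_one_of_nonneg (hx i)).symm
  have hvanish {x : Fin N → ℝ} (hx : ¬ ∀ i, 0 ≤ x i) :
      (Matrix.of fun i j => gammaPDFReal (z j) 1 (x i)).det = 0 := by
    obtain ⟨i, hi⟩ := not_forall.1 hx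
    exact Matrix.det_eq_zero_of_row_eq_zero i fun j => if_neg hi
  calc _ = ∫ x in {x : Fin N → ℝ | (∀ i, 0 ≤ x i) ∧ Monotone x}, (Matrix.vandermonde x).det *
        (Matrix.of fun i j => gammaPDFReal (z j) 1 (x i)).det :=
        setIntegral_congr_fun hS fun x hx => by rw [hpdf hx.1]
    _ = ∫ x in {x : Fin N → ℝ | Monotone x}, (Matrix.vandermonde x).det *
        (Matrix.of fun i j => gammaPDFReal (z j) 1 (x i)).det := by
        refine (setIntegral_eq_of_subset_of_forall_sdiff_eq_zero isClosed_monotone.measurableSet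
          (fun _ => And.right) ?_).symm
        rintro x ⟨hmono, hxS⟩
        rw [hvanish fun hx => hxS ⟨hx, hmono⟩, mul_zero]
    _ = (Matrix.of fun j k : Fin N => ∫ t, t ^ (j : ℕ) * gammaPDFReal (z k) 1 t).det :=
        setIntegral_monotone_det_mul_det fun j k => integrable_pow_mul_gammaPDFReal_one (hz k) j
    _ = (Matrix.vandermonde z).det := det_moments_gammaPDFReal_one hz

theorem lambdaStar_markov_kernel (N : ℕ) (β : ℝ) (hβ : 0 < β)
    (y : Fin N → ℕ) (hy : StrictMono y) :
    ∫ x in {x : Fin N → ℝ | (∀ i, 0 ≤ x i) ∧ Monotone x},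
      (vanderProd x / vanderProd (fun i => (y i : ℝ))) *
        Matrix.det (Matrix.of fun i j : Fin N =>
          x i ^ ((y j : ℝ) + β - 1) * Real.exp (-x i) /
            Real.Gamma ((y j : ℝ) + β)) = 1 := by
  have hΔ : (Matrix.vandermonde fun i => (y i : ℝ)).det ≠ 0 :=
    Matrix.det_vandermonde_ne_zero_iff.2 (Nat.cast_injective.comp hy.injective)
  have h := setIntegral_vandermonde_mul_det_gammaDensity (z := fun j => (y j : ℝ) + β)
    fun j => by positivity
  rw [Matrix.det_vandermonde_add_const] at h
  simp_rw [vanderProd, ← Matrix.det_vandermonde, div_mul_eq_mul_div]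
  rw [integral_div, h, div_self hΔ]
end

section
/- The kernel K(z,w) = e^{zw} on ℝ × ℝ is totally positive: for any z_1 < z_2 < ⋯ < z_N and w_1 < w_2 < ⋯ < w_N, det(e^{z_i w_j})_{i,j=1}^N > 0. -/
/-!
An exponential sum `∑ⱼ cⱼ e^{wⱼ t}` with `n` distinct frequencies has at most `n - 1` real zeros
unless it vanishes identically: multiply by `e^{-w₀ t}` and apply Rolle's theorem, which kills
the constant term and leaves an exponential sum with `n - 1` frequencies. Hence the matrices
`(e^{zᵢ wⱼ})` with increasing `z` and `w` are all nonsingular. This family is path-connected by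
deforming `w` linearly into `(0, 1, …, N - 1)`, where the matrix is the Vandermonde matrix of the
increasing nodes `e^{zᵢ}`, of positive determinant; the determinant cannot change sign on the way.
-/

open Real Finset

theorem pos_of_isPreconnected_of_ne_zero {X α : Type*} [TopologicalSpace X] [LinearOrder α]
    [TopologicalSpace α] [OrderClosedTopology α] [Zero α] {s : Set X} (hs : IsPreconnected s)
    {f : X → α} (hf : ContinuousOn f s) (hne : ∀ x ∈ s, f x ≠ 0) {a b : X} (ha : a ∈ s)
    (hb : b ∈ s) (hfb : 0 < f b) : 0 < f a := by
  by_contra! hfa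
  obtain ⟨x, hx, hfx⟩ := hs.intermediate_value ha hb hf ⟨hfa, hfb.le⟩
  exact hne x hx hfx

theorem exists_strictMono_hasDerivAt_eq_zero {n : ℕ} {f f' : ℝ → ℝ}
    (hf : ∀ t, HasDerivAt f (f' t) t) {x : Fin (n + 1) → ℝ} (hx : StrictMono x)
    (hfx : ∀ i, f (x i) = 0) : ∃ ξ : Fin n → ℝ, StrictMono ξ ∧ ∀ i, f' (ξ i) = 0 := by
  have hroll (i : Fin n) : ∃ ξ ∈ Set.Ioo (x i.castSucc) (x i.succ), f' ξ = 0 :=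
    exists_hasDerivAt_eq_zero (hx i.castSucc_lt_succ)
      (fun t _ => (hf t).continuousAt.continuousWithinAt)
      ((hfx _).trans (hfx _).symm) (fun t _ => hf t)
  choose ξ hξ hξ0 using hroll
  refine ⟨ξ, fun i j hij => ?_, hξ0⟩
  calc ξ i < x i.succ := (hξ i).2
    _ ≤ x j.castSucc := hx.monotone (Fin.succ_le_castSucc_iff.mpr hij)
    _ < ξ j := (hξ j).1

theorem StrictMono.convex_combination {ι : Type*} [Preorder ι] {f g : ι → ℝ}
    (hf : StrictMono f) (hg : StrictMono g) {t : ℝ} (ht : t ∈ Set.Icc (0 : ℝ) 1) :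
    StrictMono fun i => (1 - t) * f i + t * g i := fun i j hij => by
  have hmin : 0 < min (f j - f i) (g j - g i) := lt_min (sub_pos.2 (hf hij)) (sub_pos.2 (hg hij))
  show (1 - t) * f i + t * g i < (1 - t) * f j + t * g j
  nlinarith [mul_le_mul_of_nonneg_left (min_le_left (f j - f i) (g j - g i)) (sub_nonneg.2 ht.2),
    mul_le_mul_of_nonneg_left (min_le_right (f j - f i) (g j - g i)) ht.1]

noncomputable def expSum {n : ℕ} (c w : Fin n → ℝ) (t : ℝ) : ℝ :=
  ∑ j, c j * exp (w j * t)

namespace expSum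

variable {n : ℕ}

theorem hasDerivAt (c w : Fin n → ℝ) (t : ℝ) :
    HasDerivAt (expSum c w) (expSum (c * w) w t) t := by
  show HasDerivAt (fun t => ∑ j, c j * exp (w j * t)) (∑ j, c j * w j * exp (w j * t)) t
  refine (HasDerivAt.fun_sum (u := univ) fun j _ =>
    (((hasDerivAt_id t).const_mul (w j)).exp).const_mul (c j)).congr_deriv ?_
  exact sum_congr rfl fun j _ => by simp only [id, mul_one]; ring

theorem sub_const (c w : Fin n → ℝ) (a t : ℝ) :
    expSum c (fun j => w j - a) t = exp (-a * t) * expSum c w t := by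
  simp only [expSum, mul_sum]
  refine sum_congr rfl fun j _ => ?_
  rw [mul_left_comm, ← exp_add]
  ring_nf

theorem eq_const_add_tail (c w : Fin (n + 1) → ℝ) (hw : w 0 = 0) (t : ℝ) :
    expSum c w t = c 0 + expSum (fun j => c j.succ) (fun j => w j.succ) t := by
  simp [expSum, Fin.sum_univ_succ, hw]

theorem eq_zero_of_forall_eq_zero {c w x : Fin n → ℝ} (hw : StrictMono w) (hx : StrictMono x)
    (hc : ∀ i, expSum c w (x i) = 0) : c = 0 := by
  induction n with
  | zero => exact funext fun j => j.elim0
  | succ n ih =>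
    set d := fun j => w j - w 0
    have hd0 : d 0 = 0 := sub_self _
    have hdc : ∀ i, expSum c d (x i) = 0 := fun i => by
      rw [sub_const, hc, mul_zero]
    obtain ⟨ξ, hξ, hξ0⟩ := exists_strictMono_hasDerivAt_eq_zero (hasDerivAt c d) hx hdc
    have hcd : (fun j : Fin n => c j.succ * d j.succ) = 0 := by
      refine ih (w := fun j => d j.succ)
        (fun i j hij => sub_lt_sub_right (hw (Fin.succ_lt_succ_iff.mpr hij)) _) hξ fun i => ?_
      simpa [eq_const_add_tail (c * d) d hd0, hd0] using hξ0 i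
    have hc_succ (j : Fin n) : c j.succ = 0 :=
      (mul_eq_zero.mp (congrFun hcd j)).resolve_right (sub_pos.mpr (hw j.succ_pos)).ne'
    have hc0 : c 0 = 0 := by
      have h0 := hdc 0
      rwa [eq_const_add_tail c d hd0, expSum, sum_eq_zero fun j _ => by rw [hc_succ, zero_mul],
        add_zero] at h0
    exact funext fun j => Fin.cases hc0 hc_succ j

end expSum

theorem det_exp_mul_ne_zero {n : ℕ} {z w : Fin n → ℝ} (hz : StrictMono z) (hw : StrictMono w) :
    (Matrix.of fun i j => exp (z i * w j)).det ≠ 0 := by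
  intro h
  obtain ⟨c, hc, hMc⟩ := Matrix.exists_mulVec_eq_zero_iff.mpr h
  refine hc (expSum.eq_zero_of_forall_eq_zero hw hz fun i => ?_)
  simpa [Matrix.mulVec, dotProduct, expSum, mul_comm] using congrFun hMc i

theorem det_exp_mul_natCast_pos {n : ℕ} {z : Fin n → ℝ} (hz : StrictMono z) :
    0 < (Matrix.of fun i (j : Fin n) => exp (z i * j)).det := by
  have hV : (Matrix.of fun i (j : Fin n) => exp (z i * j)) =
      Matrix.vandermonde fun i => exp (z i) := by
    ext i j
    rw [Matrix.of_apply, Matrix.vandermonde_apply, mul_comm, exp_nat_mul]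
  rw [hV, Matrix.det_vandermonde]
  exact prod_pos fun i _ => prod_pos fun j hj =>
    sub_pos.mpr (exp_strictMono (hz (mem_Ioi.mp hj)))

theorem exp_kernel_totally_positive (N : ℕ) (z w : Fin N → ℝ)
    (hz : StrictMono z) (hw : StrictMono w) :
    0 < Matrix.det (Matrix.of fun i j : Fin N => Real.exp (z i * w j)) := by
  let path (t : ℝ) (j : Fin N) : ℝ := (1 - t) * w j + t * j
  have hpath : ∀ t ∈ Set.Icc (0 : ℝ) 1, StrictMono (path t) := fun t ht =>
    hw.convex_combination (fun i j hij => by exact_mod_cast hij) ht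
  have hcont : Continuous fun t => (Matrix.of fun i j => exp (z i * path t j)).det :=
    (continuous_matrix fun i j => by fun_prop).matrix_det
  have hpos := pos_of_isPreconnected_of_ne_zero isPreconnected_Icc hcont.continuousOn
    (fun t ht => det_exp_mul_ne_zero hz (hpath t ht)) (Set.left_mem_Icc.mpr zero_le_one)
    (Set.right_mem_Icc.mpr zero_le_one) (by simpa [path] using det_exp_mul_natCast_pos hz)
  simpa [path] using hpos
end

section
/- Andreif (continuous Cauchy–Binet) identity: if f_1,…,f_N and g_1,…,g_N are measurable functions on a measure space (E, μ) with all products f_i g_j integrable, then ∫_{E^N} det(f_i(z_j))_{i,j=1}^N det(g_i(z_j))_{i,j=1}^N dμ(z_1)⋯dμ(z_N) = N! · det(∫_E f_i(z) g_j(z) dμ(z))_{i,j=1}^N. -/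
/-! Expanding both determinants over permutations writes the integrand as a signed sum of
products `∏ i, f (σ i) (z i) * g (τ i) (z i)`, each of which integrates over the product
measure to `∏ i, ∫ f (σ i) * g (τ i)` by Fubini. For fixed `σ`, reindexing `τ = ρ * σ` turns
the inner sum over `τ` into the determinant of the matrix `(∫ f i * g j)`, so each of the `N!`
outer terms contributes that determinant. -/

open MeasureTheory Equiv Equiv.Perm

namespace Matrix

variable {n R : Type*} [Fintype n] [DecidableEq n] [CommRing R]

theorem det_mul_det_eq_sum_sum_prod (A B : Matrix n n R) :
    A.det * B.det = ∑ σ : Perm n, ∑ τ : Perm n,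
      ((sign σ : ℤ) : R) * ((sign τ : ℤ) : R) * ∏ i, A (σ i) i * B (τ i) i := by
  rw [det_apply', det_apply', Finset.sum_mul_sum]
  refine Finset.sum_congr rfl fun σ _ => Finset.sum_congr rfl fun τ _ => ?_
  rw [Finset.prod_mul_distrib]
  ring

theorem sum_perm_sign_mul_sign_mul_prod_eq_det (M : Matrix n n R) (σ : Perm n) :
    ∑ τ : Perm n, ((sign σ : ℤ) : R) * ((sign τ : ℤ) : R) * ∏ i, M (σ i) (τ i) =
      M.det := by
  rw [← det_transpose, det_apply', ← Equiv.sum_comp (Equiv.mulRight σ)]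
  refine Finset.sum_congr rfl fun ρ _ => ?_
  have hsign : ((sign σ : ℤ) : R) * ((sign (ρ * σ) : ℤ) : R) = ((sign ρ : ℤ) : R) := by
    rw [Perm.sign_mul, Units.val_mul, Int.cast_mul, mul_left_comm, ← Int.cast_mul,
      ← Units.val_mul, Int.units_mul_self, Units.val_one, Int.cast_one, mul_one]
  rw [coe_mulRight, hsign]
  congr 1
  exact Equiv.prod_comp σ fun i => M i (ρ i)

theorem sum_sum_perm_sign_mul_sign_mul_prod (M : Matrix n n R) :
    ∑ σ : Perm n, ∑ τ : Perm n,
      ((sign σ : ℤ) : R) * ((sign τ : ℤ) : R) * ∏ i, M (σ i) (τ i) =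
      (Fintype.card n).factorial * M.det := by
  simp only [sum_perm_sign_mul_sign_mul_prod_eq_det, Finset.sum_const, Finset.card_univ,
    Fintype.card_perm, nsmul_eq_mul]

end Matrix

theorem andreif_identity_general {E : Type*} [MeasurableSpace E] (μ : Measure E)
    [SigmaFinite μ] (N : ℕ) (f g : Fin N → E → ℝ)
    (hint : ∀ i j, Integrable (fun z => f i z * g j z) μ) :
    (∫ z : Fin N → E,
        Matrix.det (Matrix.of fun i j : Fin N => f i (z j)) *
          Matrix.det (Matrix.of fun i j : Fin N => g i (z j))
        ∂(Measure.pi fun _ => μ)) =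
      (N.factorial : ℝ) *
        Matrix.det (Matrix.of fun i j : Fin N => ∫ z, f i z * g j z ∂μ) := by
  have hterm (σ τ : Perm (Fin N)) : Integrable
      (fun z : Fin N → E => ((sign σ : ℤ) : ℝ) * ((sign τ : ℤ) : ℝ) *
        ∏ i, f (σ i) (z i) * g (τ i) (z i))
      (Measure.pi fun _ => μ) :=
    (Integrable.fintype_prod fun i => hint (σ i) (τ i)).const_mul _
  have hgram := Matrix.sum_sum_perm_sign_mul_sign_mul_prod
    (Matrix.of fun i j : Fin N => ∫ z, f i z * g j z ∂μ)
  rw [Fintype.card_fin] at hgram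
  simp_rw [Matrix.det_mul_det_eq_sum_sum_prod, Matrix.of_apply]
  rw [integral_finsetSum _ fun σ _ => integrable_finsetSum _ fun τ _ => hterm σ τ, ← hgram]
  refine Finset.sum_congr rfl fun σ _ => ?_
  rw [integral_finsetSum _ fun τ _ => hterm σ τ]
  refine Finset.sum_congr rfl fun τ _ => ?_
  rw [integral_const_mul, integral_fintype_prod_eq_prod (fun i x => f (σ i) x * g (τ i) x)]
  rfl

theorem andreif_identity {E : Type*} [MeasurableSpace E] (μ : Measure E)
    [SigmaFinite μ] (N : ℕ) (f g : Fin N → E → ℝ)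
    (hfm : ∀ i, Measurable (f i)) (hgm : ∀ i, Measurable (g i))
    (hint : ∀ i j, Integrable (fun z => f i z * g j z) μ) :
    (∫ z : Fin N → E,
        Matrix.det (Matrix.of fun i j : Fin N => f i (z j)) *
          Matrix.det (Matrix.of fun i j : Fin N => g i (z j))
        ∂(Measure.pi fun _ => μ)) =
      (N.factorial : ℝ) *
        Matrix.det (Matrix.of fun i j : Fin N => ∫ z, f i z * g j z ∂μ) :=
  andreif_identity_general μ N f g hint
end
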